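/- arXiv:2505.16291 — 5 statements merged into one kernel-verified Lean document; each statement's English description precedes it below -/
import Mathlib

section
/- Fix k ≥ 1 and for each group a∈{0,1} let (B1^a, B2^a) be Bernoulli pairs with P(Bi^a=1)=1-βi (βi∈(0,1)), standard deviations σi=sqrt(βi(1-βi)), and Pearson correlations ρ^a. Define W(a) = k·P(B1^a=1 ∧ B2^a=1) + P(B1^a ≠ B2^a). Then |W(0) - W(1)| = σ1σ2·|k-2|·|ρ^0 - ρ^1|. -/
open MeasureTheory

lemma diff_toReal {Ω : Type*} [MeasurableSpace Ω] (μ : Measure Ω) [IsProbabilityMeasure μ]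
    (A B : Set Ω) (hB : MeasurableSet B) :
    (μ (A ∩ Bᶜ)).toReal = (μ A).toReal - (μ (A ∩ B)).toReal := by
  have h := measure_inter_add_diff (μ := μ) A hB
  have h1 : μ (A ∩ B) ≠ ⊤ := measure_ne_top _ _
  have h2 : μ (A \ B) ≠ ⊤ := measure_ne_top _ _
  have : (μ (A ∩ B)).toReal + (μ (A \ B)).toReal = (μ A).toReal := by
    rw [← ENNReal.toReal_add h1 h2, h]
  rw [Set.diff_eq] at this
  linarith

/-- Welfare under 0-1-k preferences: `W a = k·P(B1^a=1 ∧ B2^a=1) + P(B1^a ≠ B2^a)`.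
Then `|W 0 - W 1| = σ1σ2·|k-2|·|ρ^0 - ρ^1|`. -/
theorem stmt6 {Ω : Type*} [MeasurableSpace Ω] (μ : Measure Ω) [IsProbabilityMeasure μ]
    (B1 B2 : Bool → Set Ω)
    (hB1 : ∀ a, MeasurableSet (B1 a)) (hB2 : ∀ a, MeasurableSet (B2 a))
    (k β1 β2 σ1 σ2 : ℝ) (ρ W : Bool → ℝ) (hk : 1 ≤ k)
    (hβ1 : β1 ∈ Set.Ioo (0:ℝ) 1) (hβ2 : β2 ∈ Set.Ioo (0:ℝ) 1)
    (h1 : ∀ a, (μ (B1 a)).toReal = 1 - β1) (h2 : ∀ a, (μ (B2 a)).toReal = 1 - β2)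
    (hσ1 : σ1 = Real.sqrt (β1 * (1 - β1))) (hσ2 : σ2 = Real.sqrt (β2 * (1 - β2)))
    (hρ : ∀ a, ρ a = ((μ (B1 a ∩ B2 a)).toReal - (1 - β1) * (1 - β2)) / (σ1 * σ2))
    (hW : ∀ a, W a = k * (μ (B1 a ∩ B2 a)).toReal
        + ((μ (B1 a ∩ (B2 a)ᶜ)).toReal + (μ ((B1 a)ᶜ ∩ B2 a)).toReal)) :
    |W false - W true| = σ1 * σ2 * |k - 2| * |ρ false - ρ true| := by
  have hσ1pos : 0 < σ1 := by
    rw [hσ1]; exact Real.sqrt_pos.2 (mul_pos hβ1.1 (by linarith [hβ1.2]))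
  have hσ2pos : 0 < σ2 := by
    rw [hσ2]; exact Real.sqrt_pos.2 (mul_pos hβ2.1 (by linarith [hβ2.2]))
  set p : Bool → ℝ := fun a => (μ (B1 a ∩ B2 a)).toReal with hp
  have hWa : ∀ a, W a = (k - 2) * p a + (1 - β1) + (1 - β2) := by
    intro a
    have e1 : (μ (B1 a ∩ (B2 a)ᶜ)).toReal = (1 - β1) - p a := by
      rw [diff_toReal μ _ _ (hB2 a), h1]
    have e2 : (μ ((B1 a)ᶜ ∩ B2 a)).toReal = (1 - β2) - p a := by
      have : (B1 a)ᶜ ∩ B2 a = B2 a ∩ (B1 a)ᶜ := Set.inter_comm _ _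
      rw [this, diff_toReal μ _ _ (hB1 a), h2]
      have : B2 a ∩ B1 a = B1 a ∩ B2 a := Set.inter_comm _ _
      rw [this]
    rw [hW a, e1, e2]; ring
  have hρa : ∀ a, ρ a = (p a - (1 - β1) * (1 - β2)) / (σ1 * σ2) := hρ
  have hσσ : (0:ℝ) < σ1 * σ2 := mul_pos hσ1pos hσ2pos
  have hdiff : W false - W true = (k - 2) * (p false - p true) := by
    rw [hWa, hWa]; ring
  have hρdiff : ρ false - ρ true = (p false - p true) / (σ1 * σ2) := by
    rw [hρa, hρa]; ring
  rw [hdiff, hρdiff, abs_mul, abs_div, abs_of_pos hσσ]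
  field_simp
end

section
/- For two EO classifiers with equal false-negative rates β1=β2=β ≤ 1/2 and utility parameter k≥1 under 0-1-k preferences, the worst-case v-EOC level over all per-group couplings of the misclassification events equals β·|k-2|. -/
/-- A coupling of Bernoulli(β1) and Bernoulli(β2) misclassification events, as a
probability vector `(p00, p01, p10, p11)` where `p00` is the probability both
classifiers misclassify, with `p00 + p01 = β1` and `p00 + p10 = β2`. -/
def IsBernoulliCoupling (β1 β2 p00 p01 p10 p11 : ℝ) : Prop :=
  0 ≤ p00 ∧ 0 ≤ p01 ∧ 0 ≤ p10 ∧ 0 ≤ p11 ∧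
  p00 + p01 + p10 + p11 = 1 ∧ p00 + p01 = β1 ∧ p00 + p10 = β2

/-- Welfare of a group under 0-1-k preferences: both classifiers approve
(i.e. neither misclassifies, probability `p11`) gives utility `k`, exactly one
approves (probability `p01 + p10`) gives utility 1. -/
def welfare01k (k p00 p01 p10 p11 : ℝ) : ℝ := k * p11 + (p01 + p10)

/-- For equal false-negative rates `β ≤ 1/2` and utility parameter `k ≥ 1`, the
worst-case v-EOC level over all per-group couplings of the misclassification
events equals `β·|k-2|`. -/
theorem stmt8 (β k : ℝ) (hβ0 : 0 ≤ β) (hβ : β ≤ 1 / 2) (hk : 1 ≤ k) :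
    IsGreatest
      {d : ℝ | ∃ p00 p01 p10 p11 q00 q01 q10 q11 : ℝ,
        IsBernoulliCoupling β β p00 p01 p10 p11 ∧
        IsBernoulliCoupling β β q00 q01 q10 q11 ∧
        d = |welfare01k k p00 p01 p10 p11 - welfare01k k q00 q01 q10 q11|}
      (β * |k - 2|) := by
  constructor
  · refine ⟨β, 0, 0, 1 - β, 0, β, β, 1 - 2 * β, ?_, ?_, ?_⟩
    · exact ⟨hβ0, le_refl 0, le_refl 0, by linarith, by ring, by ring, by ring⟩
    · exact ⟨le_refl 0, hβ0, hβ0, by linarith, by ring, by ring, by ring⟩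
    · unfold welfare01k
      have h : k * (1 - β) + (0 + 0) - (k * (1 - 2 * β) + (β + β)) = (k - 2) * β := by ring
      rw [h, abs_mul, abs_of_nonneg hβ0, mul_comm]
  · rintro d ⟨p00, p01, p10, p11, q00, q01, q10, q11,
      ⟨hp0, hp1, hp2, hp3, hps, hpb1, hpb2⟩, ⟨hq0, hq1, hq2, hq3, hqs, hqb1, hqb2⟩, rfl⟩
    unfold welfare01k
    have hp11 : p11 = 1 - 2 * β + p00 := by linarith
    have hq11 : q11 = 1 - 2 * β + q00 := by linarith
    have h : k * p11 + (p01 + p10) - (k * q11 + (q01 + q10)) = (k - 2) * (p00 - q00) := by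
      rw [hp11, hq11]; ring_nf; linarith
    rw [h, abs_mul]
    have hb : |p00 - q00| ≤ β := abs_le.mpr ⟨by linarith, by linarith⟩
    calc |k - 2| * |p00 - q00| ≤ |k - 2| * β :=
          mul_le_mul_of_nonneg_left hb (abs_nonneg _)
      _ = β * |k - 2| := mul_comm _ _
end

section
/- Suppose there are n ≥ 2 lenders each using an EO classifier with false-negative rate β∈(0,1), where on group 0 all lenders use the identical classifier (so P(all misclassify | group 0) = β) and on group 1 the misclassification events are mutually independent (so P(all misclassify | group 1) = βⁿ). Then the EOC level equals β - βⁿ, and this quantity is strictly increasing in n. -/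
/-- With `n ≥ 2` lenders, identical classifier on group 0 (all misclassify with
probability β) and independent errors on group 1 (all misclassify with
probability βⁿ), the EOC level is `β - βⁿ`, strictly increasing in `n`. -/
theorem stmt10 (n : ℕ) (hn : 2 ≤ n) (β : ℝ) (hβ : β ∈ Set.Ioo (0:ℝ) 1)
    (p0 p1 : ℝ) (h0 : p0 = β) (h1 : p1 = β ^ n) :
    |p0 - p1| = β - β ^ n ∧ ∀ m : ℕ, n < m → β - β ^ n < β - β ^ m := by
  obtain ⟨hβ0, hβ1⟩ := hβ
  subst p0 p1
  have hpow_lt : β ^ n < β := pow_lt_self_of_lt_one₀ hβ0 hβ1 hn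
  refine ⟨abs_of_pos (sub_pos.2 hpow_lt), fun m hnm => ?_⟩
  exact sub_lt_sub_left (pow_lt_pow_right_of_lt_one₀ hβ0 hβ1 hnm) β
end

section
/- For two uncorrelated EO classifiers with false-negative rates β1,β2∈[0,1] and service overlap fractions γℓ^a, γ^a satisfying 0 ≤ γ^a ≤ γℓ^a ≤ 1 and γ1^a+γ2^a-γ^a=1 for each group a, the EOC level |(γ2^0-γ2^1)β1+(γ1^0-γ1^1)β2+(γ^1-γ^0)β1β2| is at most max{β1,β2} - β1β2, and this bound is attained (e.g., with γ1^0=γ1^1=γ2^1=1, γ2^0=0 when β1 ≥ β2). -/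
/-- The EOC level of two uncorrelated EO classifiers with partially overlapping
service sets is at most `max β1 β2 - β1β2`, and the bound is attained. -/
theorem stmt12 (β1 β2 : ℝ) (hβ1 : β1 ∈ Set.Icc (0:ℝ) 1) (hβ2 : β2 ∈ Set.Icc (0:ℝ) 1) :
    (∀ γ1 γ2 γ : Bool → ℝ,
      (∀ a, 0 ≤ γ a ∧ γ a ≤ γ1 a ∧ γ a ≤ γ2 a ∧ γ1 a ≤ 1 ∧ γ2 a ≤ 1) →
      (∀ a, γ1 a + γ2 a - γ a = 1) →
      |(γ2 false - γ2 true) * β1 + (γ1 false - γ1 true) * β2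
          + (γ true - γ false) * (β1 * β2)|
        ≤ max β1 β2 - β1 * β2)
    ∧ (β2 ≤ β1 →
        ∀ γ1 γ2 γ : Bool → ℝ,
        γ1 false = 1 → γ1 true = 1 → γ2 true = 1 → γ2 false = 0 →
        γ false = 0 → γ true = 1 →
        |(γ2 false - γ2 true) * β1 + (γ1 false - γ1 true) * β2
            + (γ true - γ false) * (β1 * β2)|
          = max β1 β2 - β1 * β2) := by
  obtain ⟨hb10, hb11⟩ := hβ1
  obtain ⟨hb20, hb21⟩ := hβ2
  constructor
  · intro γ1 γ2 γ hγ hsum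
    obtain ⟨hf0, hf1, hf2, hf3, hf4⟩ := hγ false
    obtain ⟨ht0, ht1, ht2, ht3, ht4⟩ := hγ true
    have hsf := hsum false
    have hst := hsum true
    -- abbreviations
    have hx1 : γ1 false - γ1 true ≤ 1 := by linarith [ht0.trans ht1]
    have hx2 : -(1:ℝ) ≤ γ1 false - γ1 true := by linarith [hf0.trans hf1]
    have hy1 : γ2 false - γ2 true ≤ 1 := by linarith [ht0.trans ht2]
    have hy2 : -(1:ℝ) ≤ γ2 false - γ2 true := by linarith [hf0.trans hf2]
    have hs1 : (γ1 false - γ1 true) + (γ2 false - γ2 true) ≤ 1 := by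
      linarith [hf1.trans hf3]
    have hs2 : -(1:ℝ) ≤ (γ1 false - γ1 true) + (γ2 false - γ2 true) := by
      linarith [ht1.trans ht3]
    have hc1 : 0 ≤ β1 - β1 * β2 := by nlinarith
    have hc2 : 0 ≤ β2 - β1 * β2 := by nlinarith
    rw [abs_le]
    rcases le_total β1 β2 with h | h
    · rw [max_eq_right h]
      constructor
      · nlinarith [mul_nonneg hc1 (by linarith : (0:ℝ) ≤ 1 + ((γ1 false - γ1 true) + (γ2 false - γ2 true))),
          mul_nonneg (by linarith : (0:ℝ) ≤ β2 - β1) (by linarith : (0:ℝ) ≤ 1 + (γ1 false - γ1 true))]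
      · nlinarith [mul_nonneg hc1 (by linarith : (0:ℝ) ≤ 1 - ((γ1 false - γ1 true) + (γ2 false - γ2 true))),
          mul_nonneg (by linarith : (0:ℝ) ≤ β2 - β1) (by linarith : (0:ℝ) ≤ 1 - (γ1 false - γ1 true))]
    · rw [max_eq_left h]
      constructor
      · nlinarith [mul_nonneg hc2 (by linarith : (0:ℝ) ≤ 1 + ((γ1 false - γ1 true) + (γ2 false - γ2 true))),
          mul_nonneg (by linarith : (0:ℝ) ≤ β1 - β2) (by linarith : (0:ℝ) ≤ 1 + (γ2 false - γ2 true))]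
      · nlinarith [mul_nonneg hc2 (by linarith : (0:ℝ) ≤ 1 - ((γ1 false - γ1 true) + (γ2 false - γ2 true))),
          mul_nonneg (by linarith : (0:ℝ) ≤ β1 - β2) (by linarith : (0:ℝ) ≤ 1 - (γ2 false - γ2 true))]
  · intro h γ1 γ2 γ h1 h2 h3 h4 h5 h6
    rw [h1, h2, h3, h4, h5, h6, max_eq_left h]
    have : (0 - 1) * β1 + (1 - 1) * β2 + (1 - 0) * (β1 * β2) = -(β1 - β1 * β2) := by ring
    rw [this, abs_neg, abs_of_nonneg]
    nlinarith
end

section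
/- For two uncorrelated DP classifiers with equal approval probabilities η1=η2=η and per-group overlap fractions γ^0, γ^1 (where γ1^a+γ2^a-γ^a=1), the DPC level equals η(1-η)·|γ^0 - γ^1|. -/
/-- For two uncorrelated DP classifiers with equal approval probabilities
`η1 = η2 = η` and per-group overlap fractions, the DPC level equals
`η(1-η)·|γ⁰ - γ¹|`. -/
theorem stmt18 (η : ℝ) (hη : η ∈ Set.Icc (0:ℝ) 1)
    (γ1 γ2 γ : Bool → ℝ)
    (hγ : ∀ a, 0 ≤ γ a ∧ γ a ≤ γ1 a ∧ γ a ≤ γ2 a ∧ γ1 a ≤ 1 ∧ γ2 a ≤ 1)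
    (hcover : ∀ a, γ1 a + γ2 a - γ a = 1) :
    |(γ2 false - γ2 true) * (1 - η) + (γ1 false - γ1 true) * (1 - η)
        + (γ true - γ false) * ((1 - η) * (1 - η))|
      = η * (1 - η) * |γ false - γ true| := by
  obtain ⟨h0, h1⟩ := hη
  have hf := hcover false
  have ht := hcover true
  have key : (γ2 false - γ2 true) * (1 - η) + (γ1 false - γ1 true) * (1 - η)
      + (γ true - γ false) * ((1 - η) * (1 - η))
      = (η * (1 - η)) * (γ false - γ true) := by nlinarith [hf, ht]
  rw [key, abs_mul, abs_of_nonneg (by nlinarith : (0:ℝ) ≤ η * (1 - η))]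
end
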